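/- Let λ1, λ2 > 0 and let k, l ≥ 1 be integers. Let X and Y be independent real random variables, where X has the Gamma distribution with shape k and rate λ1 and Y has the Gamma distribution with shape l and rate λ2. Then lim_{Δt→+∞} ( E[|X + Δt − Y|] − (k/λ1 − l/λ2 + Δt) ) = 0. -/

import Mathlib

/-!
Writing `Z = X - Y`, the quantity is `E[|Z + t|] - E[Z + t] = E[|Z + t| - (Z + t)]`. The integrand
vanishes once `t ≥ -Z`, and for `t ≥ 0` it is dominated by the integrable `|Z| - Z`, so dominated
convergence sends it to `0`. The centring term is `E[Z] = k/λ₁ - l/λ₂`, the difference of the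
Gamma means, which come from `x · p_{a,r}(x) = (a/r) · p_{a+1,r}(x)`.
-/

open MeasureTheory ProbabilityTheory Filter Topology

section GammaMean

variable {a r : ℝ}

lemma mul_gammaPDFReal (ha : 0 < a) (hr : r ≠ 0) (x : ℝ) :
    x * gammaPDFReal a r x = a / r * gammaPDFReal (a + 1) r x := by
  unfold gammaPDFReal
  rcases lt_trichotomy x 0 with hx | rfl | hx
  · simp [not_le.mpr hx]
  · simp [Real.zero_rpow ha.ne']
  · have hΓ : Real.Gamma (a + 1) = a * Real.Gamma a := Real.Gamma_add_one ha.ne'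
    have hxpow : x ^ (a + 1 - 1) = x ^ (a - 1) * x := by
      rw [add_sub_cancel_right, ← Real.rpow_add_one hx.ne', sub_add_cancel]
    have hΓ_ne : Real.Gamma a ≠ 0 := (Real.Gamma_pos_of_pos ha).ne'
    simp only [hx.le, if_true, hΓ, hxpow, Real.rpow_add_one hr a]
    field_simp

lemma integral_gammaPDFReal (ha : 0 < a) (hr : 0 < r) : ∫ x, gammaPDFReal a r x = 1 := by
  rw [integral_eq_lintegral_of_nonneg_ae (ae_of_all _ (gammaPDFReal_nonneg ha hr))
    (measurable_gammaPDFReal a r).aestronglyMeasurable]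
  exact (congrArg ENNReal.toReal (lintegral_gammaPDF_eq_one ha hr)).trans ENNReal.toReal_one

lemma integrable_gammaPDFReal (ha : 0 < a) (hr : 0 < r) : Integrable (gammaPDFReal a r) :=
  integrable_of_integral_eq_one (integral_gammaPDFReal ha hr)

lemma measurable_gammaPDF (a r : ℝ) : Measurable (gammaPDF a r) :=
  (measurable_gammaPDFReal a r).ennreal_ofReal

lemma toReal_gammaPDF (ha : 0 < a) (hr : 0 < r) (x : ℝ) :
    (gammaPDF a r x).toReal = gammaPDFReal a r x :=
  ENNReal.toReal_ofReal (gammaPDFReal_nonneg ha hr x)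

lemma integrable_id_gammaMeasure (ha : 0 < a) (hr : 0 < r) :
    Integrable id (gammaMeasure a r) := by
  rw [gammaMeasure, integrable_withDensity_iff (measurable_gammaPDF a r)
    (ae_of_all _ fun _ => ENNReal.ofReal_lt_top)]
  simp_rw [id, toReal_gammaPDF ha hr, mul_gammaPDFReal ha hr.ne']
  exact (integrable_gammaPDFReal (by linarith) hr).const_mul _

lemma integral_id_gammaMeasure (ha : 0 < a) (hr : 0 < r) :
    ∫ x, x ∂gammaMeasure a r = a / r := by
  rw [gammaMeasure, integral_withDensity_eq_integral_toReal_smul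
    (measurable_gammaPDF a r) (ae_of_all _ fun _ => ENNReal.ofReal_lt_top)]
  simp_rw [smul_eq_mul, toReal_gammaPDF ha hr, mul_comm _ (_ : ℝ), mul_gammaPDFReal ha hr.ne']
  rw [integral_const_mul, integral_gammaPDFReal (by linarith) hr, mul_one]

end GammaMean

lemma ProbabilityTheory.HasLaw.integrable_iff {Ω E : Type*} [MeasurableSpace Ω]
    [NormedAddCommGroup E] [MeasurableSpace E] [OpensMeasurableSpace E]
    [SecondCountableTopology E] {P : Measure Ω} {ν : Measure E} {X : Ω → E}
    (hX : HasLaw X ν P) : Integrable X P ↔ Integrable id ν := by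
  rw [← hX.map_eq, integrable_map_measure aestronglyMeasurable_id hX.aemeasurable]
  rfl

theorem tendsto_integral_abs_add_sub_atTop {Ω : Type*} [MeasurableSpace Ω] {μ : Measure Ω}
    [IsProbabilityMeasure μ] {Z : Ω → ℝ} (hZ : Integrable Z μ) :
    Tendsto (fun t : ℝ => ∫ ω, |Z ω + t| ∂μ - (∫ ω, Z ω ∂μ + t)) atTop (𝓝 0) := by
  have hZt (t : ℝ) : Integrable (fun ω => Z ω + t) μ := hZ.add (integrable_const t)
  have h_eq (t : ℝ) : ∫ ω, |Z ω + t| ∂μ - (∫ ω, Z ω ∂μ + t)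
      = ∫ ω, (|Z ω + t| - (Z ω + t)) ∂μ := by
    rw [integral_sub (hZt t).abs (hZt t), integral_add hZ (integrable_const t), integral_const]
    simp
  simp_rw [h_eq]
  rw [← integral_zero Ω ℝ]
  refine tendsto_integral_filter_of_dominated_convergence (fun ω => |Z ω| - Z ω)
    (.of_forall fun t => ((hZt t).abs.sub (hZt t)).aestronglyMeasurable) ?_ (hZ.abs.sub hZ) ?_
  · filter_upwards [eventually_ge_atTop 0] with t ht
    refine ae_of_all _ fun ω => ?_
    rw [Real.norm_of_nonneg (sub_nonneg.2 (le_abs_self _))]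
    linarith [abs_add_le (Z ω) t, abs_of_nonneg ht]
  · refine ae_of_all _ fun ω => tendsto_const_nhds.congr' ?_
    filter_upwards [eventually_ge_atTop (-Z ω)] with t ht
    rw [abs_of_nonneg (by linarith), sub_self]

theorem tendsto_expected_abs_shifted_diff_atTop_general
    {Ω : Type*} [MeasurableSpace Ω] (μ : Measure Ω) [IsProbabilityMeasure μ]
    (lam1 lam2 : ℝ) (hlam1 : 0 < lam1) (hlam2 : 0 < lam2)
    (k l : ℕ) (hk : 1 ≤ k) (hl : 1 ≤ l)
    (X Y : Ω → ℝ) (hX : Measurable X) (hY : Measurable Y)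
    (hXlaw : μ.map X = gammaMeasure k lam1)
    (hYlaw : μ.map Y = gammaMeasure l lam2) :
    Tendsto (fun Δt : ℝ =>
        (∫ ω, |X ω + Δt - Y ω| ∂μ) - ((k : ℝ) / lam1 - (l : ℝ) / lam2 + Δt))
      atTop (nhds 0) := by
  have hXlaw' : HasLaw X (gammaMeasure k lam1) μ := ⟨hX.aemeasurable, hXlaw⟩
  have hYlaw' : HasLaw Y (gammaMeasure l lam2) μ := ⟨hY.aemeasurable, hYlaw⟩
  have hk' : (0 : ℝ) < k := Nat.cast_pos.mpr hk
  have hl' : (0 : ℝ) < l := Nat.cast_pos.mpr hl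
  have hXint := hXlaw'.integrable_iff.mpr (integrable_id_gammaMeasure hk' hlam1)
  have hYint := hYlaw'.integrable_iff.mpr (integrable_id_gammaMeasure hl' hlam2)
  have hEX : ∫ ω, X ω ∂μ = k / lam1 :=
    hXlaw'.integral_eq.trans (integral_id_gammaMeasure hk' hlam1)
  have hEY : ∫ ω, Y ω ∂μ = l / lam2 :=
    hYlaw'.integral_eq.trans (integral_id_gammaMeasure hl' hlam2)
  have h := tendsto_integral_abs_add_sub_atTop (Z := fun ω => X ω - Y ω) (hXint.sub hYint)
  rw [integral_sub hXint hYint, hEX, hEY] at h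
  simpa only [sub_add_eq_add_sub] using h

theorem tendsto_expected_abs_shifted_diff_atTop
    {Ω : Type*} [MeasurableSpace Ω] (μ : Measure Ω) [IsProbabilityMeasure μ]
    (lam1 lam2 : ℝ) (hlam1 : 0 < lam1) (hlam2 : 0 < lam2)
    (k l : ℕ) (hk : 1 ≤ k) (hl : 1 ≤ l)
    (X Y : Ω → ℝ) (hX : Measurable X) (hY : Measurable Y)
    (hindep : IndepFun X Y μ)
    (hXlaw : μ.map X = gammaMeasure k lam1)
    (hYlaw : μ.map Y = gammaMeasure l lam2) :
    Tendsto (fun Δt : ℝ =>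
        (∫ ω, |X ω + Δt - Y ω| ∂μ) - ((k : ℝ) / lam1 - (l : ℝ) / lam2 + Δt))
      atTop (nhds 0) :=
  tendsto_expected_abs_shifted_diff_atTop_general μ lam1 lam2 hlam1 hlam2 k l hk hl X Y hX hY hXlaw
    hYlaw
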